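/- arXiv:1803.03151 — 5 statements merged into one kernel-verified Lean document; each statement's English description precedes it below -/
import Mathlib

section
/- Let P be a finite graded poset with minimum element 0̂ and rank function ρ, and let ~ be an equivalence relation on P such that x ~ y implies ρ(x) = ρ(y). Then the relation on equivalence classes defined by X ≤ Y iff there exist x ∈ X, y ∈ Y and elements z_0, ..., z_{k+1} with x = z_0 ≤ z_1 ~ z_2 ≤ ... ≤ z_{k-1} ~ z_k ≤ z_{k+1} = y is a partial order on the set of equivalence classes. -/
/-- The order relation on equivalence classes of a rank-preserving equivalence relation:
`X ≤ Y` iff some `x ∈ X` is connected to some `y ∈ Y` by a zigzag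
`x = z₀ ≤ z₁ ∼ z₂ ≤ ⋯ ≤ z_{k-1} ∼ z_k ≤ z_{k+1} = y` of order and equivalence steps. -/
def QuotLe {P : Type} [PartialOrder P] (s : Setoid P) (X Y : Quotient s) : Prop :=
  ∃ x y : P, Quotient.mk s x = X ∧ Quotient.mk s y = Y ∧
    Relation.ReflTransGen (fun a b : P => a ≤ b ∨ s.r a b) x y

/-- The covering relation of the quotient order: `Y` covers `X` iff `X < Y` and no class
lies strictly between them. -/
def QuotCovBy {P : Type} [PartialOrder P] (s : Setoid P) (X Y : Quotient s) : Prop :=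
  (QuotLe s X Y ∧ X ≠ Y) ∧
    ∀ Z : Quotient s, (QuotLe s X Z ∧ X ≠ Z) → (QuotLe s Z Y ∧ Z ≠ Y) → False

lemma rho_strictMono {P : Type} [PartialOrder P] [Fintype P]
    (ρ : P → ℕ) (hρ : ∀ x y : P, x ⋖ y → ρ y = ρ x + 1) :
    ∀ b a : P, a < b → ρ a < ρ b := by
  intro b
  induction b using WellFoundedLT.induction with
  | ind b IH =>
    intro a hab
    obtain ⟨x, hax, hxb⟩ := exists_le_covBy_of_lt hab
    rcases hax.lt_or_eq with h | rfl
    · exact (IH x hxb.lt a h).trans (by rw [hρ x b hxb]; omega)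
    · rw [hρ a b hxb]; omega

/-- **Proposition.** Let `P` be a finite graded poset with minimum `⊥` and rank function
`ρ`, and let `∼` be an equivalence relation on `P` such that `x ∼ y` implies
`ρ x = ρ y`. Then the zigzag relation on equivalence classes is a partial order. -/
theorem quotLe_isPartialOrder {P : Type} [PartialOrder P] [Fintype P] [OrderBot P]
    (ρ : P → ℕ) (hρ0 : ρ (⊥ : P) = 0) (hρ : ∀ x y : P, x ⋖ y → ρ y = ρ x + 1)
    (s : Setoid P) (hs : ∀ x y : P, s.r x y → ρ x = ρ y) :
    IsPartialOrder (Quotient s) (QuotLe s) := by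
  have mono : ∀ a b : P, a ≤ b → ρ a ≤ ρ b := by
    intro a b h
    rcases h.lt_or_eq with h | rfl
    · exact (rho_strictMono ρ hρ b a h).le
    · exact le_rfl
  have step_mono : ∀ a b : P, (a ≤ b ∨ s.r a b) → ρ a ≤ ρ b := by
    rintro a b (h | h)
    · exact mono a b h
    · exact (hs a b h).le
  -- ρ is monotone along zigzags
  have zig_mono : ∀ a b : P, Relation.ReflTransGen (fun a b : P => a ≤ b ∨ s.r a b) a b →
      ρ a ≤ ρ b := by
    intro a b h
    induction h with
    | refl => exact le_rfl
    | tail _ hbc ih => exact ih.trans (step_mono _ _ hbc)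
  -- if ρ a = ρ b along a zigzag, then a ~ b
  have zig_eq : ∀ a b : P, Relation.ReflTransGen (fun a b : P => a ≤ b ∨ s.r a b) a b →
      ρ a = ρ b → s.r a b := by
    intro a b h
    induction h with
    | refl => intro _; exact s.refl a
    | @tail c d hac hcd ih =>
      intro hab
      have h1 : ρ a ≤ ρ c := zig_mono _ _ hac
      have h2 : ρ c ≤ ρ d := step_mono _ _ hcd
      have hceq : ρ a = ρ c := le_antisymm h1 (by omega)
      refine s.trans (ih hceq) ?_
      rcases hcd with h | h
      · rcases h.lt_or_eq with h | rfl
        · exact absurd (rho_strictMono ρ hρ d c h) (by omega)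
        · exact s.refl c
      · exact h
  refine { refl := ?_, trans := ?_, antisymm := ?_ }
  · intro X
    induction X using Quotient.ind with
    | _ x => exact ⟨x, x, rfl, rfl, Relation.ReflTransGen.refl⟩
  · rintro X Y Z ⟨x, y, hx, hy, hxy⟩ ⟨y', z, hy', hz, hyz⟩
    refine ⟨x, z, hx, hz, hxy.trans (Relation.ReflTransGen.head (Or.inr ?_) hyz)⟩
    exact Quotient.exact (hy.trans hy'.symm)
  · rintro X Y ⟨x, y, hx, hy, hxy⟩ ⟨y', x', hy', hx', hyx⟩
    subst hx hy
    have hyy' : s.r y y' := Quotient.exact hy'.symm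
    have hx'x : s.r x' x := Quotient.exact hx'
    have e1 : ρ x ≤ ρ y := zig_mono _ _ hxy
    have e2 : ρ y' ≤ ρ x' := zig_mono _ _ hyx
    have e3 : ρ y = ρ y' := hs _ _ hyy'
    have e4 : ρ x' = ρ x := hs _ _ hx'x
    exact Quotient.sound (zig_eq _ _ hxy (by omega))
end

section
/- (Newman's Lemma) Let G be a directed graph with no infinite directed walks. If G is locally confluent (for every pair of directed edges v → x and v → y there exist directed walks x ⇝ u and y ⇝ u meeting at a common vertex u), then G is confluent (for every pair of vertices x, y in the same connected component of the underlying undirected graph, there are directed walks x ⇝ u and y ⇝ u to a common vertex u). -/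
private theorem newman_key {V : Type} (r : V → V → Prop)
    (hterm : WellFounded fun a b : V => r b a)
    (hlc : ∀ v x y : V, r v x → r v y →
      ∃ u : V, Relation.ReflTransGen r x u ∧ Relation.ReflTransGen r y u) :
    ∀ a b c : V, Relation.ReflTransGen r a b → Relation.ReflTransGen r a c →
      ∃ u : V, Relation.ReflTransGen r b u ∧ Relation.ReflTransGen r c u := by
  intro a
  induction a using hterm.induction with
  | _ a ih =>
    intro b c hab hac
    rcases hab.cases_head with rfl | ⟨b₁, hab₁, hb₁b⟩
    · exact ⟨c, hac, Relation.ReflTransGen.refl⟩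
    rcases hac.cases_head with rfl | ⟨c₁, hac₁, hc₁c⟩
    · exact ⟨b, Relation.ReflTransGen.refl, hab⟩
    obtain ⟨u, hbu, hcu⟩ := hlc a b₁ c₁ hab₁ hac₁
    obtain ⟨d₁, hbd₁, hud₁⟩ := ih b₁ hab₁ b u hb₁b hbu
    obtain ⟨d, hcd, hd₁d⟩ := ih c₁ hac₁ c d₁ hc₁c (hcu.trans hud₁)
    exact ⟨d, hbd₁.trans hd₁d, hcd⟩

/-- **Newman's Lemma.** Let `r` be the edge relation of a directed graph with no
infinite directed walks (i.e. `r` is terminating). If `r` is locally confluent, then it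
is confluent: any two vertices in the same connected component (the reflexive-symmetric-
transitive closure of `r`) have directed walks to a common vertex. -/
theorem newmans_lemma {V : Type} (r : V → V → Prop)
    (hterm : WellFounded fun a b : V => r b a)
    (hlc : ∀ v x y : V, r v x → r v y →
      ∃ u : V, Relation.ReflTransGen r x u ∧ Relation.ReflTransGen r y u) :
    ∀ x y : V, Relation.EqvGen r x y →
      ∃ u : V, Relation.ReflTransGen r x u ∧ Relation.ReflTransGen r y u := by
  intro x y h
  induction h with
  | rel a b hab => exact ⟨b, Relation.ReflTransGen.single hab, Relation.ReflTransGen.refl⟩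
  | refl a => exact ⟨a, Relation.ReflTransGen.refl, Relation.ReflTransGen.refl⟩
  | symm a b _ ih => exact ⟨ih.choose, ih.choose_spec.2, ih.choose_spec.1⟩
  | trans a b c _ _ ih₁ ih₂ =>
    obtain ⟨u, hau, hbu⟩ := ih₁
    obtain ⟨v, hbv, hcv⟩ := ih₂
    obtain ⟨w, huw, hvw⟩ := newman_key r hterm hlc b u v hbu hbv
    exact ⟨w, hau.trans huw, hcv.trans hvw⟩
end

section
/- Let P be a finite graded poset with minimum 0̂ and an ER-labeling λ (an edge labeling into a poset of labels Λ such that every closed interval [x,y] has exactly one maximal chain whose labels read from bottom to top are strictly increasing). Then for all x ≤ y in P, μ(x,y) = (-1)^{ρ(y)-ρ(x)} times the number of ascent-free maximal chains in [x,y], where a maximal chain x = x_0 ⋖ x_1 ⋖ ... ⋖ x_ℓ = y is ascent-free if for no i is λ(x_{i-1} ⋖ x_i) < λ(x_i ⋖ x_{i+1}). -/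
attribute [local instance] Classical.propDecidable

/-- The Möbius function of a finite poset (preorder suffices for the recursion),
defined by `μ x x = 1` and `μ x y = -∑_{x ≤ z < y} μ x z`. -/
noncomputable def mobius {P : Type} [Preorder P] [Fintype P] (x : P) : P → ℤ
  | y =>
    if x = y then 1
    else -∑ z ∈ (Finset.univ.filter fun z : P => x ≤ z ∧ z < y).attach, mobius x z.1
termination_by y => (Finset.univ.filter fun z : P => z < y).card
decreasing_by
  have hz := z.2
  simp only [Finset.mem_filter] at hz
  refine Finset.card_lt_card ((Finset.ssubset_iff_of_subset fun w hw => ?_).mpr ⟨z.1, ?_, ?_⟩)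
  · simp only [Finset.mem_filter] at hw ⊢
    exact ⟨hw.1, hw.2.trans hz.2.2⟩
  · simp only [Finset.mem_filter]
    exact ⟨Finset.mem_univ _, hz.2.2⟩
  · simp only [Finset.mem_filter, not_and]
    exact fun _ => lt_irrefl _

/-- The `k`-th Whitney number of the first kind of a finite graded poset with
minimum `b` and rank function `ρ`: `w_k = ∑_{ρ x = k} μ(b, x)`. -/
noncomputable def whitney1 {P : Type} [Preorder P] [Fintype P] (ρ : P → ℕ) (b : P) (k : ℕ) : ℤ :=
  ∑ x ∈ Finset.univ.filter fun x : P => ρ x = k, mobius b x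

/-- The `k`-th Whitney number of the second kind: the number of elements of rank `k`. -/
noncomputable def whitney2 {P : Type} [Preorder P] [Fintype P] (ρ : P → ℕ) (k : ℕ) : ℕ :=
  (Finset.univ.filter fun x : P => ρ x = k).card
/-- A saturated chain in a poset: a nonempty list of elements in which each
consecutive pair is a covering relation. -/
def IsSatChain {P : Type} [PartialOrder P] (l : List P) : Prop :=
  l ≠ [] ∧ l.Chain' (· ⋖ ·)

/-- A saturated (maximal) chain of the closed interval `[x, y]`: a saturated chain
starting at `x` and ending at `y`. -/
def SatChainIn {P : Type} [PartialOrder P] (x y : P) (l : List P) : Prop :=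
  IsSatChain l ∧ l.head? = some x ∧ l.getLast? = some y

/-- The word of labels of a chain `x₀ ⋖ x₁ ⋖ ⋯ ⋖ x_ℓ` under the edge labeling `lab`,
namely `lab x₀ x₁, lab x₁ x₂, …, lab x_{ℓ-1} x_ℓ`. -/
def labelWord {P Λ : Type} (lab : P → P → Λ) (l : List P) : List Λ :=
  (l.zip l.tail).map fun q => lab q.1 q.2

/-- A word of labels is (strictly) increasing. -/
def IsIncreasing {Λ : Type} [Preorder Λ] (w : List Λ) : Prop := w.Chain' (· < ·)

/-- A word of labels is ascent-free: no two consecutive labels strictly increase. -/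
def IsAscentFree {Λ : Type} [Preorder Λ] (w : List Λ) : Prop :=
  w.Chain' fun a b => ¬ a < b

/-- An ER-labeling: every closed interval `[x,y]` has a unique increasing maximal chain. -/
def IsER {P Λ : Type} [PartialOrder P] [Preorder Λ] (lab : P → P → Λ) : Prop :=
  ∀ x y : P, x ≤ y → ∃! l : List P, SatChainIn x y l ∧ IsIncreasing (labelWord lab l)

/-- An ER*-labeling: every closed interval `[x,y]` has a unique ascent-free maximal chain. -/
def IsERStar {P Λ : Type} [PartialOrder P] [Preorder Λ] (lab : P → P → Λ) : Prop :=
  ∀ x y : P, x ≤ y → ∃! l : List P, SatChainIn x y l ∧ IsAscentFree (labelWord lab l)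

/-- The chain `l` has an ascent at rank `i ≥ 1`: the `(i-1)`-st and `i`-th entries of its
label word (0-indexed), i.e. the labels of the covers at ranks `i` and `i+1`,
strictly increase. -/
def HasAscentAt {P Λ : Type} [PartialOrder P] [Preorder Λ] (lab : P → P → Λ)
    (l : List P) (i : ℕ) : Prop :=
  IsSatChain l ∧ 1 ≤ i ∧
    ∃ a b, (labelWord lab l)[i-1]? = some a ∧ (labelWord lab l)[i]? = some b ∧ a < b

/-- `l'` is obtained from `l` by a quadratic exchange at rank `i`: it is a saturated
chain agreeing with `l` everywhere except (possibly) at position `i`, and its label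
word is that of `l` with the labels at positions `i-1` and `i` interchanged. -/
def IsSwapAt {P Λ : Type} [PartialOrder P] [Preorder Λ] (lab : P → P → Λ)
    (l : List P) (i : ℕ) (l' : List P) : Prop :=
  IsSatChain l' ∧ l'.length = l.length ∧ (∀ m : ℕ, m ≠ i → l'[m]? = l[m]?) ∧
    ∃ a b, (labelWord lab l)[i-1]? = some a ∧ (labelWord lab l)[i]? = some b ∧
      labelWord lab l' = ((labelWord lab l).set (i-1) b).set i a

/-- The rank two switching property: every saturated chain with an ascent at rank `i`
admits a unique chain, differing from it only at rank `i`, whose labels at the two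
corresponding positions are interchanged and whose other labels agree. -/
def RankTwoSwitch {P Λ : Type} [PartialOrder P] [Preorder Λ] (lab : P → P → Λ) : Prop :=
  ∀ l : List P, ∀ i : ℕ, HasAscentAt lab l i → ∃! l' : List P, IsSwapAt lab l i l'

/-- The quadratic exchange operator `U_i` at rank `i`: performs the quadratic exchange
at rank `i` if the chain has an ascent there, and is the identity otherwise. -/
noncomputable def Uop {P Λ : Type} [PartialOrder P] [Preorder Λ] {lab : P → P → Λ}
    (hR : RankTwoSwitch lab) (i : ℕ) (l : List P) : List P :=
  if h : HasAscentAt lab l i then (hR l i h).exists.choose else l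

/-- One-step quadratic exchange relation on saturated chains. -/
def QExStep {P Λ : Type} [PartialOrder P] [Preorder Λ] (lab : P → P → Λ)
    (l l' : List P) : Prop :=
  ∃ i : ℕ, HasAscentAt lab l i ∧ IsSwapAt lab l i l'

/-- Two saturated chains are equivalent if they are connected by quadratic exchanges
(i.e., lie in the same connected component of the exchange graph). -/
def ChainEquiv {P Λ : Type} [PartialOrder P] [Preorder Λ] (lab : P → P → Λ)
    (l l' : List P) : Prop :=
  Relation.EqvGen (QExStep lab) l l'

/-- The chain `l` has a double ascent (critical condition) at rank `i`. -/
def DoubleAscentAt {P Λ : Type} [PartialOrder P] [Preorder Λ] (lab : P → P → Λ)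
    (l : List P) (i : ℕ) : Prop :=
  HasAscentAt lab l i ∧ HasAscentAt lab l (i+1)

/-- The braid relation for the quadratic exchange operators: on any saturated chain with
a double ascent at rank `i`, `U_i U_{i+1} U_i = U_{i+1} U_i U_{i+1}`. -/
def BraidRel {P Λ : Type} [PartialOrder P] [Preorder Λ] {lab : P → P → Λ}
    (hR : RankTwoSwitch lab) : Prop :=
  ∀ (l : List P) (i : ℕ), DoubleAscentAt lab l i →
    Uop hR i (Uop hR (i+1) (Uop hR i l)) = Uop hR (i+1) (Uop hR i (Uop hR (i+1) l))

/-- The cancellative property: if `c` is a saturated chain of `[z,x]` and `c₁, c₂` are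
saturated chains of `[x,y]` with `c ∪ c₁` and `c ∪ c₂` related by quadratic exchanges,
then `c₁` and `c₂` are related by quadratic exchanges. -/
def Cancellative {P Λ : Type} [PartialOrder P] [Preorder Λ] (lab : P → P → Λ) : Prop :=
  ∀ (z x y : P) (c c₁ c₂ : List P), SatChainIn z x c → SatChainIn x y c₁ →
    SatChainIn x y c₂ → ChainEquiv lab (c ++ c₁.tail) (c ++ c₂.tail) →
      ChainEquiv lab c₁ c₂


/-!
For `x < y`, the ascent-free saturated chains that start at `x` and end at some `z ≤ y` are
paired off by a sign-reversing involution: if `z < y` and the chain stays ascent-free when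
extended by the first step `z ⋖ z'` of the increasing chain of `[z, y]`, extend it; otherwise
remove its top element. Uniqueness of increasing chains makes the two moves mutually inverse:
a removed top element is always the first increasing step from the new top. Hence
`∑_{x ≤ z ≤ y} (-1)^(ρ z - ρ x) · #{ascent-free chains of [x, z]} = 0`, and together with the
value `1` at `z = x` this is the recursion defining `μ(x, ·)`.
-/

open Finset

variable {P Λ : Type}

theorem labelWord_cons_cons (lab : P → P → Λ) (a b : P) (t : List P) :
    labelWord lab (a :: b :: t) = lab a b :: labelWord lab (b :: t) := rfl

theorem labelWord_concat (lab : P → P → Λ) {c : P} (w : P) :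
    ∀ {l : List P}, l.getLast? = some c → labelWord lab (l ++ [w]) = labelWord lab l ++ [lab c w]
  | [], h => by simp at h
  | [a], h => by
    obtain rfl : a = c := by simpa using h
    rfl
  | a :: b :: t, h => by
    rw [List.getLast?_cons_cons] at h
    exact congrArg (lab a b :: ·) (labelWord_concat lab w h)

theorem isAscentFree_concat [Preorder Λ] {u : List Λ} {b : Λ} :
    IsAscentFree (u ++ [b]) ↔ IsAscentFree u ∧ ∀ a ∈ u.getLast?, ¬ a < b := by
  show List.IsChain _ (u ++ [b]) ↔ List.IsChain _ u ∧ _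
  simp [List.isChain_append]

variable [PartialOrder P]

theorem mobius_eq_of_sum_eq_zero [Fintype P] {x : P} (f : P → ℤ) (hx : f x = 1)
    (hsum : ∀ y, x < y → ∑ z ∈ univ.filter (fun z => x ≤ z ∧ z ≤ y), f z = 0) {y : P}
    (hxy : x ≤ y) : mobius x y = f y := by
  induction y using WellFoundedLT.induction with
  | _ y ih =>
  rcases hxy.eq_or_lt with rfl | hlt
  · rw [mobius, if_pos rfl, hx]
  have hIcc : univ.filter (fun z => x ≤ z ∧ z ≤ y) =
      insert y (univ.filter fun z => x ≤ z ∧ z < y) := by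
    ext z
    simp only [mem_filter, mem_univ, true_and, mem_insert]
    constructor
    · rintro ⟨hxz, hzy⟩
      exact hzy.eq_or_lt.imp id (⟨hxz, ·⟩)
    · rintro (rfl | ⟨hxz, hzy⟩)
      exacts [⟨hxy, le_rfl⟩, ⟨hxz, hzy.le⟩]
  have hy := hsum y hlt
  rw [hIcc, sum_insert (by simp)] at hy
  rw [mobius, if_neg hlt.ne, sum_attach _ (mobius x),
    sum_congr rfl fun z hz => ih z (mem_filter.mp hz).2.2 (mem_filter.mp hz).2.1]
  linarith

namespace SatChainIn

variable {x y z : P} {l : List P}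

theorem exists_eq_cons (h : SatChainIn x y l) : ∃ t, l = x :: t := by
  obtain ⟨⟨hne, -⟩, hx, -⟩ := h
  obtain ⟨a, t, rfl⟩ := List.exists_cons_of_ne_nil hne
  exact ⟨t, by simp_all⟩

theorem exists_eq_concat (h : SatChainIn x y l) : ∃ t, l = t ++ [y] :=
  List.getLast?_eq_some_iff.mp h.2.2

theorem getLastD_eq (h : SatChainIn x y l) (d : P) : l.getLastD d = y := by
  rw [List.getLastD_eq_getLast?, h.2.2]; rfl

theorem pairwise_lt (h : SatChainIn x y l) : l.Pairwise (· < ·) :=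
  List.isChain_iff_pairwise.mp (h.1.2.imp fun _ _ => CovBy.lt)

theorem le (h : SatChainIn x y l) : x ≤ y := by
  obtain ⟨t, rfl⟩ := h.exists_eq_cons
  rcases List.mem_cons.mp (List.mem_of_getLast? h.2.2) with rfl | hy
  · rfl
  · exact (List.rel_of_pairwise_cons h.pairwise_lt hy).le

theorem singleton (x : P) : SatChainIn x x [x] :=
  ⟨⟨List.cons_ne_nil _ _, List.isChain_singleton _⟩, rfl, rfl⟩

theorem cons_cons_iff {b : P} {t : List P} :
    SatChainIn x z (x :: b :: t) ↔ x ⋖ b ∧ SatChainIn b z (b :: t) := by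
  simp only [SatChainIn, IsSatChain, ne_eq, reduceCtorEq, not_false_eq_true, true_and,
    List.head?_cons, List.getLast?_cons_cons, ← and_assoc]
  exact and_congr_left' List.isChain_cons_cons

theorem eq_singleton (h : SatChainIn x x l) : l = [x] := by
  obtain ⟨t, rfl⟩ := h.exists_eq_cons
  cases t with
  | nil => rfl
  | cons b t =>
    obtain ⟨hxb, hbx⟩ := cons_cons_iff.mp h
    exact absurd hbx.le hxb.lt.not_ge

theorem concat (h : SatChainIn x y l) (hyz : y ⋖ z) : SatChainIn x z (l ++ [z]) := by
  obtain ⟨t, rfl⟩ := h.exists_eq_cons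
  refine ⟨⟨by simp, h.1.2.append (List.isChain_singleton z) ?_⟩, rfl, List.getLast?_concat⟩
  intro a ha b hb
  rw [h.2.2, Option.mem_some_iff] at ha
  rw [List.head?_singleton, Option.mem_some_iff] at hb
  exact ha ▸ hb ▸ hyz

theorem of_concat (h : SatChainIn x z (l ++ [z])) {c : P} (hc : l.getLast? = some c) :
    SatChainIn x c l ∧ c ⋖ z := by
  have hl : l ≠ [] := by rintro rfl; simp at hc
  refine ⟨⟨⟨hl, h.1.2.prefix ⟨[z], rfl⟩⟩, ?_, hc⟩, ?_⟩
  · obtain ⟨a, t, rfl⟩ := List.exists_cons_of_ne_nil hl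
    simpa using h.2.1
  · exact (List.isChain_append.mp h.1.2).2.2 c hc z rfl

theorem length_eq (ρ : P → ℕ) (hρ : ∀ a b : P, a ⋖ b → ρ b = ρ a + 1) :
    ∀ {x : P} {l : List P}, SatChainIn x y l → ρ y + 1 = ρ x + l.length
  | _, [], h => absurd rfl h.1.1
  | x, [a], h => by
    obtain ⟨rfl, rfl⟩ : a = x ∧ a = y := by simpa using And.intro h.2.1 h.2.2
    rfl
  | x, a :: b :: t, h => by
    obtain ⟨t', ht⟩ := h.exists_eq_cons
    obtain ⟨rfl, -⟩ := List.cons.inj ht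
    obtain ⟨hab, hrest⟩ := cons_cons_iff.mp h
    have hlen := length_eq ρ hρ hrest
    have hb := hρ _ _ hab
    simp only [List.length_cons] at hlen ⊢
    omega

end SatChainIn

section Finite

variable [Fintype P] [Preorder Λ]

theorem finite_setOf_satChainIn (x z : P) : {l | SatChainIn x z l}.Finite :=
  (List.finite_length_le P (Fintype.card P)).subset fun _ hl =>
    List.Nodup.length_le_card (SatChainIn.pairwise_lt hl |>.imp ne_of_lt)

noncomputable def ascentFreeChains (lab : P → P → Λ) (x z : P) : Finset (List P) :=
  ((finite_setOf_satChainIn x z).subset fun _ hl => hl.1 :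
    {l | SatChainIn x z l ∧ IsAscentFree (labelWord lab l)}.Finite).toFinset

variable {lab : P → P → Λ} {x y z : P} {l : List P}

@[simp]
theorem mem_ascentFreeChains :
    l ∈ ascentFreeChains lab x z ↔ SatChainIn x z l ∧ IsAscentFree (labelWord lab l) :=
  Set.Finite.mem_toFinset _

theorem card_ascentFreeChains :
    (ascentFreeChains lab x z).card =
      Nat.card {l : List P // SatChainIn x z l ∧ IsAscentFree (labelWord lab l)} :=
  (Nat.card_eq_card_finite_toFinset _).symm

theorem ascentFreeChains_self : ascentFreeChains lab x x = {[x]} := by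
  ext l
  simp only [mem_ascentFreeChains, mem_singleton]
  refine ⟨fun h => h.1.eq_singleton, ?_⟩
  rintro rfl
  exact ⟨SatChainIn.singleton x, List.isChain_nil⟩

variable (lab) in
noncomputable def ascentFreeChainsBelow (x y : P) : Finset (List P) :=
  (univ.filter fun z => x ≤ z ∧ z ≤ y).biUnion (ascentFreeChains lab x)

theorem mem_ascentFreeChainsBelow : l ∈ ascentFreeChainsBelow lab x y ↔
    ∃ z, z ≤ y ∧ SatChainIn x z l ∧ IsAscentFree (labelWord lab l) := by
  simp only [ascentFreeChainsBelow, mem_biUnion, mem_filter, mem_univ, true_and,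
    mem_ascentFreeChains]
  exact ⟨fun ⟨z, ⟨_, hzy⟩, h⟩ => ⟨z, hzy, h⟩, fun ⟨z, hzy, h⟩ => ⟨z, ⟨h.1.le, hzy⟩, h⟩⟩

theorem pairwiseDisjoint_ascentFreeChains (lab : P → P → Λ) (x : P) (s : Set P) :
    s.PairwiseDisjoint (ascentFreeChains lab x) := by
  intro z _ z' _ hne
  refine Finset.disjoint_left.mpr fun l hz hz' => hne ?_
  rw [mem_ascentFreeChains] at hz hz'
  exact Option.some_injective _ (hz.1.2.2.symm.trans hz'.1.2.2)

end Finite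

namespace IsER

variable [Preorder Λ] {lab : P → P → Λ}

section Step

variable (hER : IsER lab) {c y z : P}

noncomputable def increasingChain (y z : P) : List P :=
  if h : z ≤ y then (hER z y h).exists.choose else []

/-- The element covering `z` on the increasing maximal chain of `[z, y]`. -/
noncomputable def step (y z : P) : P := (hER.increasingChain y z).getD 1 z

theorem increasingChain_spec (h : z ≤ y) :
    SatChainIn z y (hER.increasingChain y z) ∧
      IsIncreasing (labelWord lab (hER.increasingChain y z)) := by
  rw [increasingChain, dif_pos h]
  exact (hER z y h).exists.choose_spec

theorem eq_increasingChain {l : List P} (hl : SatChainIn z y l)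
    (hinc : IsIncreasing (labelWord lab l)) : l = hER.increasingChain y z :=
  (hER z y hl.le).unique ⟨hl, hinc⟩ (hER.increasingChain_spec hl.le)

theorem increasingChain_self : hER.increasingChain y y = [y] :=
  (hER.increasingChain_spec le_rfl).1.eq_singleton

theorem exists_increasingChain_eq (h : z < y) :
    ∃ t, hER.increasingChain y z = z :: hER.step y z :: t := by
  have hl := (hER.increasingChain_spec h.le).1
  obtain ⟨t, ht⟩ := hl.exists_eq_cons
  cases t with
  | nil => exact absurd (by simpa [ht] using hl.2.2) h.ne
  | cons b t => exact ⟨t, by rw [step, ht]; rfl⟩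

theorem covBy_step (h : z < y) : z ⋖ hER.step y z := by
  obtain ⟨t, ht⟩ := hER.exists_increasingChain_eq h
  have hl := (hER.increasingChain_spec h.le).1
  exact (SatChainIn.cons_cons_iff.mp (ht ▸ hl)).1

theorem step_le (h : z < y) : hER.step y z ≤ y := by
  obtain ⟨t, ht⟩ := hER.exists_increasingChain_eq h
  have hl := (hER.increasingChain_spec h.le).1
  exact (SatChainIn.cons_cons_iff.mp (ht ▸ hl)).2.le

theorem increasingChain_of_lt (h : z < y) :
    hER.increasingChain y z = z :: hER.increasingChain y (hER.step y z) := by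
  obtain ⟨t, ht⟩ := hER.exists_increasingChain_eq h
  obtain ⟨hl, hinc⟩ := hER.increasingChain_spec h.le
  rw [ht] at hl hinc ⊢
  rw [labelWord_cons_cons] at hinc
  rw [← hER.eq_increasingChain (SatChainIn.cons_cons_iff.mp hl).2 hinc.tail]

theorem lab_step_lt_lab_step_step (h : z < y) (h' : hER.step y z < y) :
    lab z (hER.step y z) < lab (hER.step y z) (hER.step y (hER.step y z)) := by
  obtain ⟨t, ht⟩ := hER.exists_increasingChain_eq h'
  have hinc := (hER.increasingChain_spec h.le).2
  rw [hER.increasingChain_of_lt h, ht, labelWord_cons_cons, labelWord_cons_cons] at hinc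
  exact List.rel_of_isChain_cons_cons hinc

theorem step_eq_of_covBy (hcz : c ⋖ z) (hzy : z ≤ y)
    (hlab : z < y → lab c z < lab z (hER.step y z)) : hER.step y c = z := by
  obtain ⟨hl, hinc⟩ := hER.increasingChain_spec hzy
  obtain ⟨t, ht⟩ := hl.exists_eq_cons
  have hcl : SatChainIn c y (c :: hER.increasingChain y z) :=
    ht ▸ SatChainIn.cons_cons_iff.mpr ⟨hcz, ht ▸ hl⟩
  have hcinc : IsIncreasing (labelWord lab (c :: hER.increasingChain y z)) := by
    rcases hzy.lt_or_eq with hzy | rfl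
    · obtain ⟨t', ht'⟩ := hER.exists_increasingChain_eq hzy
      rw [ht'] at hinc ⊢
      simp only [labelWord_cons_cons] at hinc ⊢
      exact hinc.cons_cons (hlab hzy)
    · rw [hER.increasingChain_self]
      exact List.isChain_singleton _
  rw [step, ← hER.eq_increasingChain hcl hcinc, ht]
  rfl

end Step

section Toggle

variable (hER : IsER lab) (x y : P)

noncomputable def extend (l : List P) : List P := l ++ [hER.step y (l.getLastD x)]

def CanExtend (l : List P) : Prop :=
  l.getLastD x < y ∧ IsAscentFree (labelWord lab (hER.extend x y l))

noncomputable def toggle (l : List P) : List P :=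
  if hER.CanExtend x y l then hER.extend x y l else l.dropLast

variable {x y} {l : List P}

theorem toggle_of_canExtend (h : hER.CanExtend x y l) : hER.toggle x y l = hER.extend x y l :=
  if_pos h

theorem toggle_of_not_canExtend (h : ¬ hER.CanExtend x y l) : hER.toggle x y l = l.dropLast :=
  if_neg h

variable [Fintype P]

theorem extend_mem_of_canExtend (hl : l ∈ ascentFreeChainsBelow lab x y)
    (h : hER.CanExtend x y l) :
    hER.extend x y l ∈ ascentFreeChainsBelow lab x y ∧ ¬ hER.CanExtend x y (hER.extend x y l) := by
  obtain ⟨z, -, hl, -⟩ := mem_ascentFreeChainsBelow.mp hl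
  obtain ⟨hzy, haf⟩ := h
  rw [hl.getLastD_eq] at hzy
  have hext : hER.extend x y l = l ++ [hER.step y z] := by rw [extend, hl.getLastD_eq]
  have hl' := hl.concat (hER.covBy_step hzy)
  refine ⟨mem_ascentFreeChainsBelow.mpr ⟨_, hER.step_le hzy, hext ▸ hl', haf⟩, ?_⟩
  rintro ⟨hwy, haf'⟩
  rw [hext, hl'.getLastD_eq] at hwy
  rw [extend, hext, hl'.getLastD_eq, labelWord_concat lab _ hl'.2.2,
    labelWord_concat lab _ hl.2.2, isAscentFree_concat] at haf'
  exact haf'.2 _ List.getLast?_concat (hER.lab_step_lt_lab_step_step hzy hwy)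

theorem dropLast_mem_of_not_canExtend (hxy : x < y) (hl : l ∈ ascentFreeChainsBelow lab x y)
    (h : ¬ hER.CanExtend x y l) :
    l.dropLast ∈ ascentFreeChainsBelow lab x y ∧ hER.CanExtend x y l.dropLast ∧
      hER.extend x y l.dropLast = l := by
  obtain ⟨z, hzy, hl, haf⟩ := mem_ascentFreeChainsBelow.mp hl
  obtain ⟨l₀, rfl⟩ := hl.exists_eq_concat
  obtain ⟨c, hc⟩ : ∃ c, l₀.getLast? = some c := by
    refine Option.ne_none_iff_exists'.mp fun hnil => h ?_
    obtain rfl := List.getLast?_eq_none_iff.mp hnil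
    obtain rfl : z = x := by simpa using hl.2.1
    exact ⟨hxy, List.isChain_singleton _⟩
  obtain ⟨hl₀, hcz⟩ := hl.of_concat hc
  have hstep : hER.step y c = z := by
    refine hER.step_eq_of_covBy hcz hzy fun hzy' => ?_
    by_contra hlt
    refine h ⟨by rwa [hl.getLastD_eq], ?_⟩
    rw [extend, hl.getLastD_eq, labelWord_concat lab _ hl.2.2, isAscentFree_concat]
    refine ⟨haf, ?_⟩
    rw [labelWord_concat lab z hc, List.getLast?_concat]
    simpa using hlt
  rw [labelWord_concat lab z hc, isAscentFree_concat] at haf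
  have hext : hER.extend x y l₀ = l₀ ++ [z] := by rw [extend, hl₀.getLastD_eq, hstep]
  rw [List.dropLast_concat, hext]
  refine ⟨mem_ascentFreeChainsBelow.mpr ⟨c, hcz.lt.le.trans hzy, hl₀, haf.1⟩, ⟨?_, ?_⟩, rfl⟩
  · rw [hl₀.getLastD_eq]; exact hcz.lt.trans_le hzy
  · rw [hext, labelWord_concat lab z hc, isAscentFree_concat]; exact haf

theorem toggle_mem (hxy : x < y) (hl : l ∈ ascentFreeChainsBelow lab x y) :
    hER.toggle x y l ∈ ascentFreeChainsBelow lab x y := by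
  by_cases h : hER.CanExtend x y l
  · rw [hER.toggle_of_canExtend h]
    exact (hER.extend_mem_of_canExtend hl h).1
  · rw [hER.toggle_of_not_canExtend h]
    exact (hER.dropLast_mem_of_not_canExtend hxy hl h).1

theorem toggle_toggle (hxy : x < y) (hl : l ∈ ascentFreeChainsBelow lab x y) :
    hER.toggle x y (hER.toggle x y l) = l := by
  by_cases h : hER.CanExtend x y l
  · rw [hER.toggle_of_canExtend h,
      hER.toggle_of_not_canExtend (hER.extend_mem_of_canExtend hl h).2, extend,
      List.dropLast_concat]
  · obtain ⟨-, h', hext⟩ := hER.dropLast_mem_of_not_canExtend hxy hl h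
    rw [hER.toggle_of_not_canExtend h, hER.toggle_of_canExtend h', hext]

theorem length_toggle (hxy : x < y) (hl : l ∈ ascentFreeChainsBelow lab x y) :
    (hER.toggle x y l).length = l.length + 1 ∨ (hER.toggle x y l).length + 1 = l.length := by
  by_cases h : hER.CanExtend x y l
  · rw [hER.toggle_of_canExtend h, extend, List.length_append]
    exact Or.inl rfl
  · obtain ⟨-, -, hext⟩ := hER.dropLast_mem_of_not_canExtend hxy hl h
    rw [hER.toggle_of_not_canExtend h]
    exact Or.inr (by simpa [extend] using congrArg List.length hext)

end Toggle

theorem sum_neg_one_pow_length_eq_zero [Fintype P] (hER : IsER lab) {x y : P} (hxy : x < y) :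
    ∑ l ∈ ascentFreeChainsBelow lab x y, (-1 : ℤ) ^ l.length = 0 := by
  refine sum_involution (fun l _ => hER.toggle x y l) (fun l hl => ?_) (fun l hl _ heq => ?_)
    (fun l hl => hER.toggle_mem hxy hl) (fun l hl => hER.toggle_toggle hxy hl)
  · rcases hER.length_toggle hxy hl with h | h
    · rw [h, pow_succ]; ring
    · rw [← h, pow_succ]; ring
  · rcases hER.length_toggle hxy hl with h | h <;> rw [heq] at h <;> omega

theorem sum_neg_one_pow_mul_card_ascentFreeChains [Fintype P] (hER : IsER lab) (ρ : P → ℕ) (hρ : ∀ a b : P, a ⋖ b → ρ b = ρ a + 1)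
    {x y : P} (hxy : x < y) :
    ∑ z ∈ univ.filter (fun z => x ≤ z ∧ z ≤ y),
      (-1 : ℤ) ^ (ρ z - ρ x) * (ascentFreeChains lab x z).card = 0 := by
  have hfiber : ∀ z ∈ univ.filter (fun z => x ≤ z ∧ z ≤ y),
      ∑ l ∈ ascentFreeChains lab x z, (-1 : ℤ) ^ l.length =
        -((-1 : ℤ) ^ (ρ z - ρ x) * (ascentFreeChains lab x z).card) := by
    intro z hz
    have hlen : ∀ l ∈ ascentFreeChains lab x z, l.length = ρ z - ρ x + 1 := by
      intro l hl
      have hl := (mem_ascentFreeChains.mp hl).1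
      have := hl.length_eq ρ hρ
      have := List.length_pos_of_ne_nil hl.1.1
      omega
    rw [sum_congr rfl fun l hl => congrArg _ (hlen l hl), sum_const, pow_succ, nsmul_eq_mul]
    ring
  have hsum := hER.sum_neg_one_pow_length_eq_zero hxy
  rw [ascentFreeChainsBelow, sum_biUnion (pairwiseDisjoint_ascentFreeChains lab x _),
    sum_congr rfl hfiber, sum_neg_distrib] at hsum
  exact neg_eq_zero.mp hsum

end IsER

theorem mobius_eq_of_isER_general {P Λ : Type} [PartialOrder P] [Fintype P]
    [PartialOrder Λ] (ρ : P → ℕ)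
    (hρ : ∀ x y : P, x ⋖ y → ρ y = ρ x + 1)
    (lab : P → P → Λ) (hER : IsER lab) :
    ∀ x y : P, x ≤ y →
      mobius x y = (-1 : ℤ) ^ (ρ y - ρ x) *
        Nat.card {l : List P // SatChainIn x y l ∧ IsAscentFree (labelWord lab l)} := by
  intro x y hxy
  rw [← card_ascentFreeChains]
  refine mobius_eq_of_sum_eq_zero (fun z => (-1) ^ (ρ z - ρ x) * (ascentFreeChains lab x z).card)
    ?_ (fun y hxy => hER.sum_neg_one_pow_mul_card_ascentFreeChains ρ hρ hxy) hxy
  simp [ascentFreeChains_self]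

/-- **Theorem (cf. Theorem 3.14.2 of Stanley).**
If `λ` is an ER-labeling of a finite graded poset `P` with minimum `⊥`, then for all
`x ≤ y`, `μ(x,y) = (-1)^{ρ(y)-ρ(x)} · #(ascent-free maximal chains of `[x,y]`)`. -/
theorem mobius_eq_of_isER {P Λ : Type} [PartialOrder P] [Fintype P] [OrderBot P]
    [PartialOrder Λ] (ρ : P → ℕ) (hρ0 : ρ (⊥ : P) = 0)
    (hρ : ∀ x y : P, x ⋖ y → ρ y = ρ x + 1)
    (lab : P → P → Λ) (hER : IsER lab) :
    ∀ x y : P, x ≤ y →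
      mobius x y = (-1 : ℤ) ^ (ρ y - ρ x) *
        Nat.card {l : List P // SatChainIn x y l ∧ IsAscentFree (labelWord lab l)} :=
  mobius_eq_of_isER_general ρ hρ lab hER
end

section
/- Let F be a rooted forest on vertex set [n] and let v_1, v_2, ..., v_k be an ordered listing of its non-root vertices. Define F_0 to be the forest with no edges and all vertices roots, and F_i obtained from F_{i-1} by adding the edge {v_i, p(v_i)} (p(v_i) the parent of v_i in F) and removing v_i from the root set. Then F_0 ⋖ F_1 ⋖ ... ⋖ F_k is a saturated chain in the poset SF_n of rooted spanning forests if and only if the listing v_1, ..., v_k is a linear extension of F (i.e., whenever v_i is a descendant of v_j in F, then i < j). -/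
attribute [local instance] Classical.propDecidable

/-- The edge set of the rooted forest on `Fin n` given by the parent map `p`:
the unordered pairs `{x, p x}`. -/
def forestEdges {n : ℕ} (p : Fin n → Option (Fin n)) : Set (Sym2 (Fin n)) :=
  {e | ∃ x y : Fin n, e = s(x, y) ∧ p x = some y}

/-- The root set of the rooted forest given by the parent map `p`. -/
def forestRoots {n : ℕ} (p : Fin n → Option (Fin n)) : Set (Fin n) :=
  {x | p x = none}

/-- A pair (edge set, root set) arises from a rooted spanning forest on `[n]`:
it is realized by an acyclic parent map. -/
def IsForestPair {n : ℕ} (F : Set (Sym2 (Fin n)) × (Set (Fin n))ᵒᵈ) : Prop :=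
  ∃ p : Fin n → Option (Fin n), (WellFounded fun a b : Fin n => p b = some a) ∧
    F.1 = forestEdges p ∧ OrderDual.ofDual F.2 = forestRoots p

/-- The poset `SF n` of rooted spanning forests on `[n]`, ordered by
`F ≤ F' ↔ E(F) ⊆ E(F') ∧ R(F') ⊆ R(F)`. -/
def SF (n : ℕ) : Type := {F : Set (Sym2 (Fin n)) × (Set (Fin n))ᵒᵈ // IsForestPair F}

instance (n : ℕ) : PartialOrder (SF n) := Subtype.partialOrder _
instance (n : ℕ) : Finite (SF n) := Subtype.finite
noncomputable instance (n : ℕ) : Fintype (SF n) := Fintype.ofFinite _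

/-- The minimum of `SF n`: the forest with no edges, in which every vertex is a root. -/
def sfBot (n : ℕ) : SF n :=
  ⟨(∅, OrderDual.toDual Set.univ),
    ⟨fun _ => none,
      ⟨fun a => Acc.intro a fun _ h => absurd h (by simp)⟩,
      by ext e; simp [forestEdges], by ext x; simp [forestRoots]⟩⟩

/-- The edge set of a rooted spanning forest. -/
def sfEdges {n : ℕ} (F : SF n) : Set (Sym2 (Fin n)) := F.1.1

/-- The root set of a rooted spanning forest. -/
def sfRoots {n : ℕ} (F : SF n) : Set (Fin n) := OrderDual.ofDual F.1.2

/-- The covering relation of `SF n`: `F'` covers `F` when `F'` is obtained from `F` by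
adding one edge between two roots `x, y` of `F` and keeping exactly one of them as the
root of the merged tree. -/
def SFCovBy {n : ℕ} (F F' : SF n) : Prop :=
  ∃ x y : Fin n, x ≠ y ∧ x ∈ sfRoots F ∧ y ∈ sfRoots F ∧
    sfEdges F' = insert s(x, y) (sfEdges F) ∧
    (sfRoots F' = sfRoots F \ {x} ∨ sfRoots F' = sfRoots F \ {y})

/-- The restriction of a parent map `p` to the vertices in the list `s`: vertices
outside `s` become roots. -/
def restrictParent {n : ℕ} (p : Fin n → Option (Fin n)) (s : List (Fin n)) :
    Fin n → Option (Fin n) :=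
  fun x => if x ∈ s then p x else none

/-- The rooted spanning forest obtained from the parent map `p` by keeping only the
parent edges of the vertices in the list `s`. -/
def mkForest {n : ℕ} (p : Fin n → Option (Fin n))
    (hp : WellFounded fun a b : Fin n => p b = some a) (s : List (Fin n)) : SF n :=
  ⟨(forestEdges (restrictParent p s), OrderDual.toDual (forestRoots (restrictParent p s))),
    ⟨restrictParent p s,
      Subrelation.wf (fun h => by
        simp only [restrictParent] at h
        split at h
        · exact h
        · exact absurd h (by simp)) hp,
      rfl, rfl⟩⟩

/-!
Adding the parent edge `{v, p v}` of a vertex `v` to a sub-forest of `F` is a cover in `SF n`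
exactly when `p v` is still a root there, i.e. when `p v` has not been listed before `v`. So the
chain is saturated iff every vertex is listed before its parent; since every vertex on a path
towards a root other than the root itself is listed, this propagates to all ancestors.
-/

section Forest

variable {n : ℕ} {p : Fin n → Option (Fin n)} {hp : WellFounded fun a b : Fin n => p b = some a}
  {s : List (Fin n)} {v w : Fin n}

lemma ne_of_parent_eq_some (hp : WellFounded fun a b : Fin n => p b = some a) (h : p v = some w) :
    v ≠ w := by
  rintro rfl
  exact hp.asymmetric _ _ h h

lemma restrictParent_eq_some {x y : Fin n} :
    restrictParent p s x = some y ↔ x ∈ s ∧ p x = some y := by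
  unfold restrictParent
  split_ifs with hx <;> simp [hx]

lemma mem_sfEdges_mkForest {e : Sym2 (Fin n)} :
    e ∈ sfEdges (mkForest p hp s) ↔ ∃ x y, e = s(x, y) ∧ x ∈ s ∧ p x = some y := by
  simp only [sfEdges, mkForest, forestEdges, Set.mem_ofPred_eq, restrictParent_eq_some]

lemma mem_sfRoots_mkForest {x : Fin n} :
    x ∈ sfRoots (mkForest p hp s) ↔ x ∉ s ∨ p x = none := by
  simp only [sfRoots, mkForest, OrderDual.ofDual_toDual, forestRoots, restrictParent,
    Set.mem_ofPred_eq]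
  split_ifs with hx <;> simp [hx]

lemma sfEdges_mkForest_append_singleton (hw : p v = some w) :
    sfEdges (mkForest p hp (s ++ [v])) = insert s(v, w) (sfEdges (mkForest p hp s)) := by
  ext e
  simp only [mem_sfEdges_mkForest, Set.mem_insert_iff, List.mem_append, List.mem_singleton]
  constructor
  · rintro ⟨x, y, rfl, hx | rfl, hxy⟩
    · exact .inr ⟨x, y, rfl, hx, hxy⟩
    · cases hw.symm.trans hxy
      exact .inl rfl
  · rintro (rfl | ⟨x, y, rfl, hx, hxy⟩)
    · exact ⟨v, w, rfl, .inr rfl, hw⟩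
    · exact ⟨x, y, rfl, .inl hx, hxy⟩

lemma sfRoots_mkForest_append_singleton (hw : p v = some w) :
    sfRoots (mkForest p hp (s ++ [v])) = sfRoots (mkForest p hp s) \ {v} := by
  ext x
  simp only [Set.mem_sdiff, Set.mem_singleton_iff, mem_sfRoots_mkForest, List.mem_append,
    List.mem_singleton]
  by_cases hxv : x = v
  · subst hxv; simp [hw]
  · simp [hxv]

lemma mk_notMem_sfEdges_mkForest (hv : v ∉ s) (hw : p v = some w) :
    s(v, w) ∉ sfEdges (mkForest p hp s) := by
  rw [mem_sfEdges_mkForest]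
  rintro ⟨x, y, hxy, hx, hpx⟩
  rcases Sym2.eq_iff.mp hxy with ⟨rfl, -⟩ | ⟨rfl, rfl⟩
  · exact hv hx
  · exact hp.asymmetric _ _ hw hpx

lemma sfCovBy_mkForest_append_singleton_iff (hv : v ∉ s) (hw : p v = some w) :
    SFCovBy (mkForest p hp s) (mkForest p hp (s ++ [v])) ↔ w ∈ sfRoots (mkForest p hp s) := by
  have hvroot : v ∈ sfRoots (mkForest p hp s) := mem_sfRoots_mkForest.mpr (.inl hv)
  constructor
  · rintro ⟨x, y, -, hx, hy, hE, -⟩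
    have hnew : s(v, w) ∈ insert s(x, y) (sfEdges (mkForest p hp s)) := by
      rw [← hE, sfEdges_mkForest_append_singleton hw]
      exact Set.mem_insert _ _
    rcases hnew with hvw | hold
    · rcases Sym2.eq_iff.mp hvw with ⟨-, rfl⟩ | ⟨-, rfl⟩ <;> assumption
    · exact absurd hold (mk_notMem_sfEdges_mkForest hv hw)
  · intro hwroot
    exact ⟨v, w, ne_of_parent_eq_some hp hw, hvroot, hwroot, sfEdges_mkForest_append_singleton hw,
      .inl (sfRoots_mkForest_append_singleton hw)⟩

end Forest

namespace List

variable {α : Type*} {l : List α}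

lemma notMem_take_iff_forall_getElem {i : ℕ} {a : α} :
    a ∉ l.take i ↔ ∀ j (hj : j < l.length), l[j] = a → i ≤ j := by
  simp only [mem_take_iff_getElem, lt_min_iff, not_exists]
  exact ⟨fun h j hj hja => not_lt.mp fun hji => h j ⟨hji, hj⟩ hja,
    fun h j hj hja => (h j hj.2 hja).not_gt hj.1⟩

lemma Nodup.getElem_notMem_take (hl : l.Nodup) {i : ℕ} (hi : i < l.length) : l[i] ∉ l.take i :=
  notMem_take_iff_forall_getElem.mpr fun _ _ h => (hl.getElem_inj_iff.mp h).ge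

lemma forall_transGen_getElem_lt_iff {r : α → α → Prop} (hr : ∀ a b, r a b → a ∈ l) :
    (∀ i j (hi : i < l.length) (hj : j < l.length), Relation.TransGen r l[i] l[j] → i < j) ↔
      ∀ i (hi : i < l.length) j (hj : j < l.length), r l[i] l[j] → i < j := by
  refine ⟨fun h i hi j hj hij => h i j hi hj (.single hij), fun h i j hi hj hpath => ?_⟩
  suffices ∀ b, Relation.TransGen r l[i] b → ∀ j (hj : j < l.length), l[j] = b → i < j from
    this _ hpath j hj rfl
  intro b hpath
  induction hpath with
  | single hab => rintro j hj rfl; exact h i hi j hj hab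
  | tail _ hcb ih =>
    rintro j hj rfl
    obtain ⟨k, hk, rfl⟩ := mem_iff_getElem.mp (hr _ _ hcb)
    exact (ih k hk rfl).trans (h k hk j hj hcb)

end List

section Listing

variable {n : ℕ} {p : Fin n → Option (Fin n)} {hp : WellFounded fun a b : Fin n => p b = some a}
  {l : List (Fin n)}

lemma sfCovBy_mkForest_take_succ_iff (hnodup : l.Nodup)
    (hmem : ∀ x : Fin n, x ∈ l ↔ p x ≠ none) {i : ℕ} (hi : i < l.length) :
    SFCovBy (mkForest p hp (l.take i)) (mkForest p hp (l.take (i + 1))) ↔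
      ∀ j (hj : j < l.length), p l[i] = some l[j] → i < j := by
  obtain ⟨w, hw⟩ := Option.ne_none_iff_exists'.mp ((hmem _).mp (l.getElem_mem hi))
  have hwroot : p w = none → w ∉ l.take i := fun hw h => (hmem w).mp (List.mem_of_mem_take h) hw
  rw [List.take_succ_eq_append_getElem hi,
    sfCovBy_mkForest_append_singleton_iff (hnodup.getElem_notMem_take hi) hw,
    mem_sfRoots_mkForest, or_iff_left_of_imp hwroot, List.notMem_take_iff_forall_getElem]
  refine forall₂_congr fun j hj => ?_
  rw [hw, Option.some_inj, eq_comm]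
  refine imp_congr_right fun hwj => ⟨fun hij => hij.lt_of_ne ?_, le_of_lt⟩
  rintro rfl
  exact ne_of_parent_eq_some hp hw hwj.symm

end Listing

/-- **Lemma.** Let `F` be a rooted forest on `[n]` given by an acyclic parent map `p`,
and let `v₁, …, v_k` (the list `l`) be an ordered listing of its non-root vertices.
Let `F_i` be obtained from the edgeless forest `F₀` by successively adding the edges
`{v_j, p v_j}` for `j ≤ i` and removing `v_j` from the root set.  Then
`F₀ ⋖ F₁ ⋖ ⋯ ⋖ F_k` is a saturated chain in `SF n` if and only if the listing is a
linear extension of `F` (whenever `v_i` is a descendant of `v_j` in `F`, `i < j`). -/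
theorem chain_iff_linear_extension {n : ℕ} (p : Fin n → Option (Fin n))
    (hp : WellFounded fun a b : Fin n => p b = some a)
    (l : List (Fin n)) (hnodup : l.Nodup)
    (hmem : ∀ x : Fin n, x ∈ l ↔ p x ≠ none) :
    ((List.range (l.length + 1)).map fun i => mkForest p hp (l.take i)).Chain'
        (SFCovBy (n := n)) ↔
      ∀ (i j : ℕ) (hi : i < l.length) (hj : j < l.length),
        Relation.TransGen (fun a b : Fin n => p a = some b) (l.get ⟨i, hi⟩) (l.get ⟨j, hj⟩) →
          i < j := by
  change List.IsChain _ _ ↔ _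
  simp only [List.get_eq_getElem]
  rw [List.forall_transGen_getElem_lt_iff fun a b h => (hmem a).mpr (by simp [h]),
    List.isChain_map, List.isChain_range_succ]
  exact forall₂_congr fun i hi => sfCovBy_mkForest_take_succ_iff hnodup hmem hi
end

section
/- Let P be a finite graded poset with an ER-labeling λ satisfying the rank two switching property and such that in each interval each ascent-free maximal chain is uniquely determined by its word of labels. Then λ satisfies the braid relation: for every saturated chain c with a double ascent at rank i (three consecutive strictly increasing labels), U_i U_{i+1} U_i (c) = U_{i+1} U_i U_{i+1} (c), where U_j denotes the quadratic exchange at rank j (and identity if there is no ascent at rank j). -/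
attribute [local instance] Classical.propDecidable

private lemma labelWord_length' {P Λ : Type} (lab : P → P → Λ) (l : List P) :
    (labelWord lab l).length = l.length - 1 := by
  simp [labelWord]

private lemma labelWord_getElem?' {P Λ : Type} (lab : P → P → Λ) (l : List P) (j : ℕ)
    (h : j + 1 < l.length) :
    (labelWord lab l)[j]? = some (lab (l[j]'(by omega)) (l[j+1]'h)) := by
  have hj : j < (labelWord lab l).length := by rw [labelWord_length']; omega
  rw [List.getElem?_eq_getElem hj]
  simp only [labelWord, List.getElem_map, List.getElem_zip, List.getElem_tail]

private lemma uop_spec {P Λ : Type} [PartialOrder P] [Preorder Λ] {lab : P → P → Λ}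
    (hR : RankTwoSwitch lab) {l : List P} {i : ℕ} (h : HasAscentAt lab l i) :
    IsSwapAt lab l i (Uop hR i l) := by
  rw [Uop, dif_pos h]
  exact (hR l i h).exists.choose_spec

private lemma labelWord_four {P Λ : Type} (lab : P → P → Λ) (p q r s : P) :
    labelWord lab [p, q, r, s] = [lab p q, lab q r, lab r s] := rfl

/-- **Theorem.** Let `λ` be an ER-labeling of a finite graded poset `P` with the rank two
switching property, such that in each interval each ascent-free maximal chain is
determined uniquely by its word of labels.  Then `λ` satisfies the braid relation:
`U_i U_{i+1} U_i (c) = U_{i+1} U_i U_{i+1} (c)` for every saturated chain `c` with a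
double ascent at rank `i`, where `U_j` is the quadratic exchange at rank `j` (identity
when there is no ascent at rank `j`). -/
theorem braid_of_EW {P Λ : Type} [PartialOrder P] [Fintype P] [OrderBot P]
    [PartialOrder Λ] (ρ : P → ℕ) (hρ0 : ρ (⊥ : P) = 0)
    (hρ : ∀ x y : P, x ⋖ y → ρ y = ρ x + 1)
    (lab : P → P → Λ) (hER : IsER lab) (hR : RankTwoSwitch lab)
    (hUnique : ∀ (x y : P) (l l' : List P), SatChainIn x y l → SatChainIn x y l' →
      IsAscentFree (labelWord lab l) → IsAscentFree (labelWord lab l') →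
      labelWord lab l = labelWord lab l' → l = l') :
    BraidRel hR := by
  intro l i hDA
  have hA2 : HasAscentAt lab l (i+1) := hDA.2
  obtain ⟨hsat, hi1, a, b, ha, hb, hab⟩ := hDA.1
  obtain ⟨j, rfl⟩ : ∃ j, i = j + 1 := ⟨i - 1, by omega⟩
  obtain ⟨-, -, b', c, hb', hc, hbc⟩ := hA2
  simp only [Nat.add_sub_cancel] at ha hb' hc hb
  have hb'b : b = b' := by rw [hb] at hb'; exact Option.some.inj hb'
  subst hb'b
  have hwlen : (labelWord lab l).length = l.length - 1 := labelWord_length' lab l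
  have hjlt : j + 1 + 1 < (labelWord lab l).length := by
    rcases List.getElem?_eq_some_iff.mp hc with ⟨h, -⟩; exact h
  have hL : j + 1 + 1 + 1 + 1 ≤ l.length := by omega
  -- LHS chain of operations
  have hAsc1 : HasAscentAt lab l (j+1) := ⟨hsat, by omega, a, b, ha, hb, hab⟩
  have hS1 := uop_spec hR hAsc1
  set m1 := Uop hR (j+1) l with hm1def
  obtain ⟨hsat1, hlen1, helem1, a1, b1, ha1, hb1, hw1⟩ := hS1
  simp only [Nat.add_sub_cancel] at ha1 hw1
  rw [ha] at ha1; rw [hb] at hb1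
  obtain rfl : a = a1 := Option.some.inj ha1
  obtain rfl : b = b1 := Option.some.inj hb1
  have hw1len : (labelWord lab m1).length = (labelWord lab l).length := by
    rw [hw1]; simp
  have h1a : (labelWord lab m1)[j]? = some b := by
    rw [hw1, List.getElem?_set_ne (show j+1 ≠ j by omega),
      List.getElem?_set_self (show j < (labelWord lab l).length by omega)]
  have h1b : (labelWord lab m1)[j+1]? = some a := by
    rw [hw1, List.getElem?_set_self
      (show j+1 < ((labelWord lab l).set j b).length by
        simp only [List.length_set]; omega)]
  have h1c : (labelWord lab m1)[j+1+1]? = some c := by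
    rw [hw1, List.getElem?_set_ne (show j+1 ≠ j+1+1 by omega),
      List.getElem?_set_ne (show j ≠ j+1+1 by omega)]
    exact hc
  have hAsc2 : HasAscentAt lab m1 (j+1+1) :=
    ⟨hsat1, by omega, a, c, h1b, h1c, lt_trans hab hbc⟩
  have hS2 := uop_spec hR hAsc2
  set m2 := Uop hR (j+1+1) m1 with hm2def
  obtain ⟨hsat2, hlen2, helem2, a2, b2, ha2, hb2, hw2⟩ := hS2
  simp only [Nat.add_sub_cancel] at ha2 hw2
  rw [h1b] at ha2; rw [h1c] at hb2
  obtain rfl : a = a2 := Option.some.inj ha2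
  obtain rfl : c = b2 := Option.some.inj hb2
  have hw2len : (labelWord lab m2).length = (labelWord lab l).length := by
    rw [hw2]; simp [hw1len]
  have h2a : (labelWord lab m2)[j]? = some b := by
    rw [hw2, List.getElem?_set_ne (show j+1+1 ≠ j by omega),
      List.getElem?_set_ne (show j+1 ≠ j by omega)]
    exact h1a
  have h2b : (labelWord lab m2)[j+1]? = some c := by
    rw [hw2, List.getElem?_set_ne (show j+1+1 ≠ j+1 by omega),
      List.getElem?_set_self (show j+1 < (labelWord lab m1).length by omega)]
  have h2c : (labelWord lab m2)[j+1+1]? = some a := by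
    rw [hw2, List.getElem?_set_self
      (show j+1+1 < ((labelWord lab m1).set (j+1) c).length by
        simp only [List.length_set]; omega)]
  have hAsc3 : HasAscentAt lab m2 (j+1) := ⟨hsat2, by omega, b, c, h2a, h2b, hbc⟩
  have hS3 := uop_spec hR hAsc3
  set m3 := Uop hR (j+1) m2 with hm3def
  obtain ⟨hsat3, hlen3, helem3, a3, b3, ha3, hb3, hw3⟩ := hS3
  simp only [Nat.add_sub_cancel] at ha3 hw3
  rw [h2a] at ha3; rw [h2b] at hb3
  obtain rfl : b = a3 := Option.some.inj ha3
  obtain rfl : c = b3 := Option.some.inj hb3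
  have h3a : (labelWord lab m3)[j]? = some c := by
    rw [hw3, List.getElem?_set_ne (show j+1 ≠ j by omega),
      List.getElem?_set_self (show j < (labelWord lab m2).length by omega)]
  have h3b : (labelWord lab m3)[j+1]? = some b := by
    rw [hw3, List.getElem?_set_self
      (show j+1 < ((labelWord lab m2).set j c).length by
        simp only [List.length_set]; omega)]
  have h3c : (labelWord lab m3)[j+1+1]? = some a := by
    rw [hw3, List.getElem?_set_ne (show j+1 ≠ j+1+1 by omega),
      List.getElem?_set_ne (show j ≠ j+1+1 by omega)]
    exact h2c
  -- RHS chain of operations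
  have hAscN1 : HasAscentAt lab l (j+1+1) := ⟨hsat, by omega, b, c, hb, hc, hbc⟩
  have hT1 := uop_spec hR hAscN1
  set n1 := Uop hR (j+1+1) l with hn1def
  obtain ⟨hsatn1, hlenn1, helemn1, p1, q1, hp1, hq1, hv1⟩ := hT1
  simp only [Nat.add_sub_cancel] at hp1 hv1
  rw [hb] at hp1; rw [hc] at hq1
  obtain rfl : b = p1 := Option.some.inj hp1
  obtain rfl : c = q1 := Option.some.inj hq1
  have hv1len : (labelWord lab n1).length = (labelWord lab l).length := by
    rw [hv1]; simp
  have g1a : (labelWord lab n1)[j]? = some a := by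
    rw [hv1, List.getElem?_set_ne (show j+1+1 ≠ j by omega),
      List.getElem?_set_ne (show j+1 ≠ j by omega)]
    exact ha
  have g1b : (labelWord lab n1)[j+1]? = some c := by
    rw [hv1, List.getElem?_set_ne (show j+1+1 ≠ j+1 by omega),
      List.getElem?_set_self (show j+1 < (labelWord lab l).length by omega)]
  have g1c : (labelWord lab n1)[j+1+1]? = some b := by
    rw [hv1, List.getElem?_set_self
      (show j+1+1 < ((labelWord lab l).set (j+1) c).length by
        simp only [List.length_set]; omega)]
  have hAscN2 : HasAscentAt lab n1 (j+1) :=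
    ⟨hsatn1, by omega, a, c, g1a, g1b, lt_trans hab hbc⟩
  have hT2 := uop_spec hR hAscN2
  set n2 := Uop hR (j+1) n1 with hn2def
  obtain ⟨hsatn2, hlenn2, helemn2, p2, q2, hp2, hq2, hv2⟩ := hT2
  simp only [Nat.add_sub_cancel] at hp2 hv2
  rw [g1a] at hp2; rw [g1b] at hq2
  obtain rfl : a = p2 := Option.some.inj hp2
  obtain rfl : c = q2 := Option.some.inj hq2
  have hv2len : (labelWord lab n2).length = (labelWord lab l).length := by
    rw [hv2]; simp [hv1len]
  have g2a : (labelWord lab n2)[j]? = some c := by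
    rw [hv2, List.getElem?_set_ne (show j+1 ≠ j by omega),
      List.getElem?_set_self (show j < (labelWord lab n1).length by omega)]
  have g2b : (labelWord lab n2)[j+1]? = some a := by
    rw [hv2, List.getElem?_set_self
      (show j+1 < ((labelWord lab n1).set j c).length by
        simp only [List.length_set]; omega)]
  have g2c : (labelWord lab n2)[j+1+1]? = some b := by
    rw [hv2, List.getElem?_set_ne (show j+1 ≠ j+1+1 by omega),
      List.getElem?_set_ne (show j ≠ j+1+1 by omega)]
    exact g1c
  have hAscN3 : HasAscentAt lab n2 (j+1+1) :=
    ⟨hsatn2, by omega, a, b, g2b, g2c, hab⟩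
  have hT3 := uop_spec hR hAscN3
  set n3 := Uop hR (j+1+1) n2 with hn3def
  obtain ⟨hsatn3, hlenn3, helemn3, p3, q3, hp3, hq3, hv3⟩ := hT3
  simp only [Nat.add_sub_cancel] at hp3 hv3
  rw [g2b] at hp3; rw [g2c] at hq3
  obtain rfl : a = p3 := Option.some.inj hp3
  obtain rfl : b = q3 := Option.some.inj hq3
  have g3a : (labelWord lab n3)[j]? = some c := by
    rw [hv3, List.getElem?_set_ne (show j+1+1 ≠ j by omega),
      List.getElem?_set_ne (show j+1 ≠ j by omega)]
    exact g2a
  have g3b : (labelWord lab n3)[j+1]? = some b := by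
    rw [hv3, List.getElem?_set_ne (show j+1+1 ≠ j+1 by omega),
      List.getElem?_set_self (show j+1 < (labelWord lab n2).length by omega)]
  have g3c : (labelWord lab n3)[j+1+1]? = some a := by
    rw [hv3, List.getElem?_set_self
      (show j+1+1 < ((labelWord lab n2).set (j+1) b).length by
        simp only [List.length_set]; omega)]
  -- lengths and elements outside the swapped positions
  have hm3L : m3.length = l.length := by rw [hlen3, hlen2, hlen1]
  have hn3L : n3.length = l.length := by rw [hlenn3, hlenn2, hlenn1]
  have hm3e : ∀ k, k ≠ j+1 → k ≠ j+1+1 → m3[k]? = l[k]? := by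
    intro k h1 h2
    rw [helem3 k h1, helem2 k h2, helem1 k h1]
  have hn3e : ∀ k, k ≠ j+1 → k ≠ j+1+1 → n3[k]? = l[k]? := by
    intro k h1 h2
    rw [helemn3 k h2, helemn2 k h1, helemn1 k h2]
  -- boundary elements agree with those of l
  have em0 : m3[j]'(by omega) = l[j]'(by omega) := by
    have h := hm3e j (by omega) (by omega)
    rw [List.getElem?_eq_getElem (show j < m3.length by omega),
      List.getElem?_eq_getElem (show j < l.length by omega)] at h
    exact Option.some.inj h
  have em3 : m3[j+1+1+1]'(by omega) = l[j+1+1+1]'(by omega) := by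
    have h := hm3e (j+1+1+1) (by omega) (by omega)
    rw [List.getElem?_eq_getElem (show j+1+1+1 < m3.length by omega),
      List.getElem?_eq_getElem (show j+1+1+1 < l.length by omega)] at h
    exact Option.some.inj h
  have en0 : n3[j]'(by omega) = l[j]'(by omega) := by
    have h := hn3e j (by omega) (by omega)
    rw [List.getElem?_eq_getElem (show j < n3.length by omega),
      List.getElem?_eq_getElem (show j < l.length by omega)] at h
    exact Option.some.inj h
  have en3 : n3[j+1+1+1]'(by omega) = l[j+1+1+1]'(by omega) := by
    have h := hn3e (j+1+1+1) (by omega) (by omega)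
    rw [List.getElem?_eq_getElem (show j+1+1+1 < n3.length by omega),
      List.getElem?_eq_getElem (show j+1+1+1 < l.length by omega)] at h
    exact Option.some.inj h
  -- the two slices of length four
  have hchm := List.isChain_iff_getElem.mp hsat3.2
  have hchn := List.isChain_iff_getElem.mp hsatn3.2
  have cm1 : m3[j]'(by omega) ⋖ m3[j+1]'(by omega) := by
    simpa using hchm j (by omega)
  have cm2 : m3[j+1]'(by omega) ⋖ m3[j+1+1]'(by omega) := by
    simpa using hchm (j+1) (by omega)
  have cm3 : m3[j+1+1]'(by omega) ⋖ m3[j+1+1+1]'(by omega) := by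
    simpa using hchm (j+1+1) (by omega)
  have cn1 : n3[j]'(by omega) ⋖ n3[j+1]'(by omega) := by
    simpa using hchn j (by omega)
  have cn2 : n3[j+1]'(by omega) ⋖ n3[j+1+1]'(by omega) := by
    simpa using hchn (j+1) (by omega)
  have cn3 : n3[j+1+1]'(by omega) ⋖ n3[j+1+1+1]'(by omega) := by
    simpa using hchn (j+1+1) (by omega)
  have hsc1 : SatChainIn (l[j]'(by omega)) (l[j+1+1+1]'(by omega))
      [m3[j]'(by omega), m3[j+1]'(by omega), m3[j+1+1]'(by omega), m3[j+1+1+1]'(by omega)] := by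
    refine ⟨⟨by simp, ?_⟩, ?_, ?_⟩
    · exact List.isChain_cons_cons.mpr ⟨cm1, List.isChain_cons_cons.mpr ⟨cm2,
        List.isChain_cons_cons.mpr ⟨cm3, List.isChain_singleton _⟩⟩⟩
    · simp [em0]
    · simp [List.getLast?, em3]
  have hsc2 : SatChainIn (l[j]'(by omega)) (l[j+1+1+1]'(by omega))
      [n3[j]'(by omega), n3[j+1]'(by omega), n3[j+1+1]'(by omega), n3[j+1+1+1]'(by omega)] := by
    refine ⟨⟨by simp, ?_⟩, ?_, ?_⟩
    · exact List.isChain_cons_cons.mpr ⟨cn1, List.isChain_cons_cons.mpr ⟨cn2,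
        List.isChain_cons_cons.mpr ⟨cn3, List.isChain_singleton _⟩⟩⟩
    · simp [en0]
    · simp [List.getLast?, en3]
  -- the label values on the slices
  have lm1 : lab (m3[j]'(by omega)) (m3[j+1]'(by omega)) = c := by
    have h := labelWord_getElem?' lab m3 j (by omega)
    rw [h3a] at h
    exact (Option.some.inj h).symm
  have lm2 : lab (m3[j+1]'(by omega)) (m3[j+1+1]'(by omega)) = b := by
    have h := labelWord_getElem?' lab m3 (j+1) (by omega)
    rw [h3b] at h
    exact (Option.some.inj h).symm
  have lm3 : lab (m3[j+1+1]'(by omega)) (m3[j+1+1+1]'(by omega)) = a := by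
    have h := labelWord_getElem?' lab m3 (j+1+1) (by omega)
    rw [h3c] at h
    exact (Option.some.inj h).symm
  have ln1 : lab (n3[j]'(by omega)) (n3[j+1]'(by omega)) = c := by
    have h := labelWord_getElem?' lab n3 j (by omega)
    rw [g3a] at h
    exact (Option.some.inj h).symm
  have ln2 : lab (n3[j+1]'(by omega)) (n3[j+1+1]'(by omega)) = b := by
    have h := labelWord_getElem?' lab n3 (j+1) (by omega)
    rw [g3b] at h
    exact (Option.some.inj h).symm
  have ln3 : lab (n3[j+1+1]'(by omega)) (n3[j+1+1+1]'(by omega)) = a := by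
    have h := labelWord_getElem?' lab n3 (j+1+1) (by omega)
    rw [g3c] at h
    exact (Option.some.inj h).symm
  have hwm : labelWord lab
      [m3[j]'(by omega), m3[j+1]'(by omega), m3[j+1+1]'(by omega), m3[j+1+1+1]'(by omega)]
      = [c, b, a] := by
    rw [labelWord_four, lm1, lm2, lm3]
  have hwn : labelWord lab
      [n3[j]'(by omega), n3[j+1]'(by omega), n3[j+1+1]'(by omega), n3[j+1+1+1]'(by omega)]
      = [c, b, a] := by
    rw [labelWord_four, ln1, ln2, ln3]
  have haf : IsAscentFree ([c, b, a] : List Λ) :=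
    List.isChain_cons_cons.mpr ⟨lt_asymm hbc, List.isChain_cons_cons.mpr
      ⟨lt_asymm hab, List.isChain_singleton _⟩⟩
  have key := hUnique (l[j]'(by omega)) (l[j+1+1+1]'(by omega)) _ _ hsc1 hsc2
    (by rw [hwm]; exact haf) (by rw [hwn]; exact haf) (by rw [hwm, hwn])
  simp only [List.cons.injEq, and_true] at key
  obtain ⟨-, k1, k2, -⟩ := key
  -- conclude
  apply List.ext_getElem?
  intro k
  by_cases hk1 : k = j+1
  · subst hk1
    rw [List.getElem?_eq_getElem (show j+1 < m3.length by omega),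
      List.getElem?_eq_getElem (show j+1 < n3.length by omega)]
    exact congrArg some k1
  by_cases hk2 : k = j+1+1
  · subst hk2
    rw [List.getElem?_eq_getElem (show j+1+1 < m3.length by omega),
      List.getElem?_eq_getElem (show j+1+1 < n3.length by omega)]
    exact congrArg some k2
  · rw [hm3e k hk1 hk2, hn3e k hk1 hk2]
end
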